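/- Let g(x,t) = (x²+t²)/(2t) for |x| ≤ t and g(x,t) = |x| for |x| ≥ t, let s ∈ [1,4], d(s) = 2√s − s, 0 < δ ≤ d(s), and define ḡ(x,s) = g(x,s) − 2 for |x| ≤ d(s) − δ and ḡ(x,s) = |x| − (d(s)−δ) + g(d(s)−δ, s) − 2 for |x| ≥ d(s) − δ. Then for every τ > 0 and every x with |x| ≤ d(s) − δ, inf_{y ∈ ℝ} ( ḡ(y,s) + g(x − y, τ) ) = g(x, s + τ) − 2. -/
import Mathlib


open Real Set

/-- Rost's profile `g(x,t) = (x²+t²)/(2t)` if `|x| ≤ t`, `g(x,t) = |x|` if `|x| ≥ t`. -/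
noncomputable def rost (x t : ℝ) : ℝ := if |x| ≤ t then (x ^ 2 + t ^ 2) / (2 * t) else |x|

/-- `d(t) = 2√t − t`. -/
noncomputable def dPole (t : ℝ) : ℝ := 2 * Real.sqrt t - t

/-- The modified (pole-flattened) profile `ḡ(x,s)`: equal to `g(x,s) − 2` for
`|x| ≤ d(s) − δ`, extended with slopes `±1` outside. -/
noncomputable def rostBar (δ x s : ℝ) : ℝ :=
  if |x| ≤ dPole s - δ then rost x s - 2
  else |x| - (dPole s - δ) + rost (dPole s - δ) s - 2

/-- Supporting line: for `|p| ≤ 1`, `rost · t` lies above the line `p y + (1-p²)t/2`. -/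
lemma rost_line_le (t p y : ℝ) (ht : 0 < t) (hp : |p| ≤ 1) :
    p * y + (1 - p ^ 2) * t / 2 ≤ rost y t := by
  rw [rost]
  split_ifs with h
  · rw [le_div_iff₀ (by linarith : (0:ℝ) < 2 * t)]
    nlinarith [sq_nonneg (y - p * t)]
  · push_neg at h
    have h1 : p * y ≤ |p| * |y| := by
      calc p * y ≤ |p * y| := le_abs_self _
        _ = |p| * |y| := abs_mul p y
    have h2 : (0:ℝ) ≤ 1 - |p| := by linarith
    have h3 : (0:ℝ) ≤ |y| - t := by linarith
    have h4 : p ^ 2 = |p| ^ 2 := (sq_abs p).symm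
    nlinarith [mul_nonneg h2 h3, mul_nonneg (mul_nonneg h2 h2) ht.le]

/-- The flattened profile dominates `rost - 2`. -/
lemma rostBar_ge (δ s y : ℝ) (hs : 0 < s) (ha0 : 0 ≤ dPole s - δ) (has : dPole s - δ ≤ s) :
    rost y s - 2 ≤ rostBar δ y s := by
  rw [rostBar]
  split_ifs with h
  · exact le_rfl
  · push_neg at h
    rw [rost, rost, abs_of_nonneg ha0, if_pos has]
    split_ifs with h1
    · have key : (y ^ 2 - (dPole s - δ) ^ 2) / (2 * s) ≤ |y| - (dPole s - δ) := by
        rw [div_le_iff₀ (by linarith : (0:ℝ) < 2 * s)]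
        nlinarith [sq_abs y, mul_nonneg (by linarith : (0:ℝ) ≤ |y| - (dPole s - δ))
          (by linarith : (0:ℝ) ≤ 2 * s - |y| - (dPole s - δ))]
      have e : (y ^ 2 + s ^ 2) / (2 * s) - ((dPole s - δ) ^ 2 + s ^ 2) / (2 * s)
          = (y ^ 2 - (dPole s - δ) ^ 2) / (2 * s) := by ring
      linarith
    · have : dPole s - δ ≤ ((dPole s - δ) ^ 2 + s ^ 2) / (2 * s) := by
        rw [le_div_iff₀ (by linarith : (0:ℝ) < 2 * s)]
        nlinarith [sq_nonneg (dPole s - δ - s)]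
      linarith

/-- evolving the flattened profile `ḡ(·,s)` for a time `τ` through the
inf-convolution formula gives back `g(·, s+τ) − 2` on `[−(d(s)−δ), d(s)−δ]`. -/
theorem rostBar_evolution (s δ : ℝ) (hs : s ∈ Icc (1:ℝ) 4) (hδ : 0 < δ)
    (hδd : δ ≤ dPole s) (τ : ℝ) (hτ : 0 < τ) (x : ℝ) (hx : |x| ≤ dPole s - δ) :
    (⨅ y : ℝ, (rostBar δ y s + rost (x - y) τ)) = rost x (s + τ) - 2 := by
  obtain ⟨hs1, hs4⟩ := hs
  have hs0 : (0:ℝ) < s := by linarith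
  have hsq : Real.sqrt s ^ 2 = s := Real.sq_sqrt hs0.le
  have hq0 : 0 ≤ Real.sqrt s := Real.sqrt_nonneg s
  have h1s : 1 ≤ Real.sqrt s := by nlinarith
  have hds : dPole s ≤ s := by rw [dPole]; nlinarith
  have ha0 : 0 ≤ dPole s - δ := le_trans (abs_nonneg x) hx
  have has : dPole s - δ ≤ s := by linarith
  have hst : (0:ℝ) < s + τ := by linarith
  have hx' : |x| ≤ s + τ := by linarith
  have hxs : |x| ≤ s := by linarith
  have hrx : rost x (s + τ) = (x ^ 2 + (s + τ) ^ 2) / (2 * (s + τ)) := by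
    rw [rost, if_pos hx']
  -- lower bound
  have hlb : ∀ y : ℝ, rost x (s + τ) - 2 ≤ rostBar δ y s + rost (x - y) τ := by
    intro y
    have hp : |x / (s + τ)| ≤ 1 := by
      rw [abs_div, abs_of_pos hst, div_le_one hst]; linarith
    have h1 := rost_line_le s (x / (s + τ)) y hs0 hp
    have h2 := rost_line_le τ (x / (s + τ)) (x - y) hτ hp
    have h3 := rostBar_ge δ s y hs0 ha0 has
    have hid : (x / (s + τ)) * y + (1 - (x / (s + τ)) ^ 2) * s / 2
        + ((x / (s + τ)) * (x - y) + (1 - (x / (s + τ)) ^ 2) * τ / 2)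
        = (x ^ 2 + (s + τ) ^ 2) / (2 * (s + τ)) := by
      field_simp
      ring
    rw [hrx]
    linarith
  have hbdd : BddBelow (Set.range fun y : ℝ => rostBar δ y s + rost (x - y) τ) := by
    refine ⟨rost x (s + τ) - 2, ?_⟩
    rintro _ ⟨y, rfl⟩
    exact hlb y
  -- upper bound: attained at y₀ = x s/(s+τ)
  have hub : rostBar δ (x * s / (s + τ)) s + rost (x - x * s / (s + τ)) τ
      = rost x (s + τ) - 2 := by
    have hy0 : |x * s / (s + τ)| ≤ dPole s - δ := by
      rw [abs_div, abs_mul, abs_of_pos hs0, abs_of_pos hst, div_le_iff₀ hst]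
      nlinarith [abs_nonneg x]
    have hy0s : |x * s / (s + τ)| ≤ s := le_trans hy0 has
    have hxy : |x - x * s / (s + τ)| ≤ τ := by
      have e : x - x * s / (s + τ) = x * τ / (s + τ) := by field_simp; ring
      rw [e, abs_div, abs_mul, abs_of_pos hτ, abs_of_pos hst, div_le_iff₀ hst]
      nlinarith [abs_nonneg x]
    rw [rostBar, if_pos hy0, rost, if_pos hy0s, rost, if_pos hxy, hrx]
    field_simp
    ring
  exact le_antisymm ((ciInf_le hbdd (x * s / (s + τ))).trans hub.le) (le_ciInf hlb)
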